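/- Let F : 2^V → ℝ be submodular with F(∅)=0 and P(S) ∝ exp(−F(S)). Then min over factorized positive distributions Q of D_∞(P‖Q) equals −log Z_P + min_{s∈B(F)} ∑_{i∈V} log(1+exp(−s_i)); in particular, the divergence minimization problem and the L-Field variational problem have the same optimal modular parameter. -/

import Mathlib

/-- A set function is submodular iff it has diminishing marginal gains. -/
def Submodular {V : Type*} [DecidableEq V] (F : Finset V → ℝ) : Prop :=
  ∀ A B : Finset V, A ⊆ B → ∀ x ∉ B,
    F (insert x B) - F B ≤ F (insert x A) - F A

/-- The base polytope `B(F)` of a normalized submodular function. -/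
def basePolytope {V : Type*} [Fintype V] [DecidableEq V] (F : Finset V → ℝ) :
    Set (V → ℝ) :=
  {s | (∀ A : Finset V, ∑ i ∈ A, s i ≤ F A) ∧ ∑ i : V, s i = F Finset.univ}

/-- The Rényi divergence of infinite order between `P(S) ∝ exp(-F(S))` and
the factorized distribution `Q(S) ∝ ∏_{i∈S} exp(-qᵢ)`. -/
noncomputable def dInfty {V : Type*} [Fintype V] [DecidableEq V]
    (F : Finset V → ℝ) (q : V → ℝ) : ℝ :=
  Real.log ((Finset.univ : Finset (Finset V)).sup' Finset.univ_nonempty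
    (fun S => (Real.exp (-(F S)) / ∑ A : Finset V, Real.exp (-(F A))) /
              (Real.exp (-(∑ i ∈ S, q i)) /
                ∑ A : Finset V, Real.exp (-(∑ i ∈ A, q i)))))

/-!
Write `Φ(q) = ∑ᵢ log (1 + exp (-qᵢ))`, which is `log Z_Q`, and `m(q) = max_S (q(S) - F(S)) ≥ 0`.
Then `D_∞(P‖Q) = m(q) - log Z_P + Φ(q)`, and `m` vanishes on `B(F)`, so a minimiser `s` of `Φ`
on the compact set `B(F)` has `D_∞ = -log Z_P + Φ(s)`. For an arbitrary `q`, put `c = m(q)`: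
then `q` lies in the submodular polyhedron of `F + c` (shifted on nonempty sets only), so it can
be raised to a base `u` of that function, and `u` can be lowered to a base `s'` of `F`; lowering
is raising for the dual function `A ↦ F(Aᶜ) - F(V)`. As `Φ` is antitone while `Φ(x) + ∑ᵢ xᵢ` is
monotone, `Φ(s') ≤ Φ(u) + ∑ᵢ (uᵢ - s'ᵢ) = Φ(u) + c ≤ Φ(q) + m(q)`.
-/

open Finset

def submodularPolyhedron {V : Type*} (G : Finset V → ℝ) : Set (V → ℝ) :=
  {q | ∀ A : Finset V, ∑ i ∈ A, q i ≤ G A}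

def IsTight {V : Type*} (G : Finset V → ℝ) (q : V → ℝ) (A : Finset V) : Prop :=
  ∑ i ∈ A, q i = G A

namespace Submodular

variable {V : Type*} [DecidableEq V] {G : Finset V → ℝ}

theorem sub_le_sub_of_disjoint (hG : Submodular G) (E : Finset V) {C D : Finset V}
    (hCD : C ⊆ D) (hED : Disjoint E D) : G (D ∪ E) - G D ≤ G (C ∪ E) - G C := by
  induction E using Finset.induction with
  | empty => simp
  | insert a E haE ih =>
    rw [disjoint_insert_left] at hED
    have hstep := hG (C ∪ E) (D ∪ E) (union_subset_union hCD subset_rfl) a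
      (by simp [hED.1, haE])
    rw [union_insert, union_insert]
    linarith [ih hED.2]

theorem union_add_inter_le (hG : Submodular G) (A B : Finset V) :
    G (A ∪ B) + G (A ∩ B) ≤ G A + G B := by
  have h := hG.sub_le_sub_of_disjoint (B \ A) (inter_subset_right : B ∩ A ⊆ A) sdiff_disjoint
  have hB : B ∩ A ∪ B \ A = B := sup_inf_sdiff B A
  rw [union_sdiff_self_eq_union, hB, inter_comm] at h
  linarith

theorem isTight_union (hG : Submodular G) {q : V → ℝ} (hq : q ∈ submodularPolyhedron G)
    {A B : Finset V} (hA : IsTight G q A) (hB : IsTight G q B) : IsTight G q (A ∪ B) := by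
  have hsum : ∑ i ∈ A ∪ B, q i + ∑ i ∈ A ∩ B, q i = ∑ i ∈ A, q i + ∑ i ∈ B, q i :=
    sum_union_inter
  unfold IsTight at *
  linarith [hG.union_add_inter_le A B, hq (A ∪ B), hq (A ∩ B)]

theorem exists_isTight_superset (hG : Submodular G) (hG0 : G ∅ = 0) {q : V → ℝ}
    (hq : q ∈ submodularPolyhedron G) (hcover : ∀ i, ∃ A, i ∈ A ∧ IsTight G q A)
    (S : Finset V) : ∃ A, S ⊆ A ∧ IsTight G q A := by
  induction S using Finset.induction with
  | empty => exact ⟨∅, subset_rfl, by simp [IsTight, hG0]⟩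
  | insert x S _ ih =>
    obtain ⟨A, hSA, hA⟩ := ih
    obtain ⟨B, hxB, hB⟩ := hcover x
    exact ⟨A ∪ B, insert_subset (mem_union_right A hxB) (hSA.trans subset_union_left),
      hG.isTight_union hq hA hB⟩

theorem compl [Fintype V] (hG : Submodular G) : Submodular fun A => G Aᶜ - G univ := by
  intro A B hAB x hxB
  have hxA : x ∉ A := fun hx => hxB (hAB hx)
  have h := hG (insert x B)ᶜ (insert x A)ᶜ (compl_subset_compl.2 (insert_subset_insert x hAB)) x
    (by simp)
  rw [insert_compl_insert hxB, insert_compl_insert hxA] at h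
  dsimp only
  linarith

end Submodular

section Polytope

variable {V : Type*} [Fintype V] [DecidableEq V] {G : Finset V → ℝ}

/-- Raise `q` at `j` by the least slack of the sets containing `j`; a tight set containing `j`
forces that slack to be zero. -/
theorem exists_le_mem_isTight {q : V → ℝ} (hq : q ∈ submodularPolyhedron G) (j : V) :
    ∃ q' ∈ submodularPolyhedron G, q ≤ q' ∧ (∃ A, j ∈ A ∧ IsTight G q' A) ∧
      ∀ A, IsTight G q A → IsTight G q' A := by
  obtain ⟨A₀, hjA₀, hmin⟩ := exists_min_image (univ.filter (j ∈ ·))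
    (fun A => G A - ∑ i ∈ A, q i) ⟨{j}, by simp⟩
  simp only [mem_filter, mem_univ, true_and] at hjA₀ hmin
  set δ := G A₀ - ∑ i ∈ A₀, q i
  have hδ : 0 ≤ δ := sub_nonneg.2 (hq A₀)
  have hsum (A : Finset V) :
      ∑ i ∈ A, (q + Pi.single j δ : V → ℝ) i = ∑ i ∈ A, q i + if j ∈ A then δ else 0 := by
    simp only [Pi.add_apply, sum_add_distrib, sum_pi_single']
  refine ⟨q + Pi.single j δ, fun A => ?_, le_add_of_nonneg_right (Pi.single_nonneg.2 hδ),
    ⟨A₀, hjA₀, ?_⟩, fun A hA => ?_⟩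
  · rw [hsum]
    split_ifs with hjA
    · linarith [hmin A hjA]
    · simpa using hq A
  · rw [IsTight, hsum, if_pos hjA₀]
    ring
  · rw [IsTight, hsum]
    split_ifs with hjA
    · have hslack := hmin A hjA
      rw [IsTight] at hA
      linarith
    · simpa [IsTight] using hA

theorem Submodular.exists_mem_basePolytope_ge (hG : Submodular G) (hG0 : G ∅ = 0)
    {q : V → ℝ} (hq : q ∈ submodularPolyhedron G) : ∃ s ∈ basePolytope G, q ≤ s := by
  have hraise (T : Finset V) : ∃ q' ∈ submodularPolyhedron G, q ≤ q' ∧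
      ∀ i ∈ T, ∃ A, i ∈ A ∧ IsTight G q' A := by
    induction T using Finset.induction with
    | empty => exact ⟨q, hq, le_rfl, by simp⟩
    | insert j T _ ih =>
      obtain ⟨q₁, hq₁, hqq₁, htight₁⟩ := ih
      obtain ⟨q₂, hq₂, hq₁q₂, hj, hmono⟩ := exists_le_mem_isTight hq₁ j
      refine ⟨q₂, hq₂, hqq₁.trans hq₁q₂, fun i hi => ?_⟩
      rcases mem_insert.1 hi with rfl | hi
      · exact hj
      · obtain ⟨A, hiA, hA⟩ := htight₁ i hi
        exact ⟨A, hiA, hmono A hA⟩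
  obtain ⟨s, hs, hqs, htight⟩ := hraise univ
  obtain ⟨A, hA, hAt⟩ :=
    hG.exists_isTight_superset hG0 hs (fun i => htight i (mem_univ i)) univ
  rw [univ_subset_iff.1 hA] at hAt
  exact ⟨s, ⟨hs, hAt⟩, hqs⟩

theorem Submodular.exists_mem_basePolytope_le (hG : Submodular G) (hG0 : G ∅ = 0)
    {u : V → ℝ} (hu : ∀ A, G univ - G Aᶜ ≤ ∑ i ∈ A, u i) :
    ∃ s ∈ basePolytope G, s ≤ u := by
  obtain ⟨t, ⟨ht, htV⟩, hut⟩ := hG.compl.exists_mem_basePolytope_ge (by simp)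
    (q := -u) fun A => by simpa [neg_le_sub_iff_le_add, add_comm] using hu A
  simp only [compl_univ, hG0, zero_sub] at htV
  refine ⟨-t, ⟨fun A => ?_, by simp [htV]⟩, fun i => neg_le.1 (hut i)⟩
  have hsplit := sum_add_sum_compl A t
  have hAc := ht Aᶜ
  simp only [compl_compl] at hAc
  simp only [Pi.neg_apply, sum_neg_distrib]
  linarith

theorem Submodular.basePolytope_nonempty (hG : Submodular G) (hG0 : G ∅ = 0) :
    (basePolytope G).Nonempty := by
  obtain ⟨m, hm⟩ := (Set.finite_range G).bddBelow
  set c := min m 0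
  have hc : ∀ A : Finset V, ∑ _i ∈ A, c ≤ G A := fun A => by
    rcases A.eq_empty_or_nonempty with rfl | hA
    · simp [hG0]
    · have hcard : (1 : ℝ) ≤ #A := by exact_mod_cast hA.card_pos
      have hmA : m ≤ G A := hm ⟨A, rfl⟩
      rw [sum_const, nsmul_eq_mul]
      nlinarith [min_le_left m 0, min_le_right m 0]
  obtain ⟨s, hs, -⟩ := hG.exists_mem_basePolytope_ge hG0 hc
  exact ⟨s, hs⟩

theorem isClosed_basePolytope (G : Finset V → ℝ) : IsClosed (basePolytope G) := by
  have hsum (A : Finset V) : Continuous fun s : V → ℝ => ∑ i ∈ A, s i :=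
    continuous_finsetSum A fun i _ => continuous_apply i
  simp only [basePolytope, Set.ofPred_and, Set.ofPred_forall]
  exact (isClosed_iInter fun A => isClosed_le (hsum A) continuous_const).inter
    (isClosed_eq (hsum univ) continuous_const)

theorem basePolytope_subset_Icc (G : Finset V → ℝ) :
    basePolytope G ⊆ Set.Icc (fun i => G univ - G {i}ᶜ) (fun i => G {i}) := by
  rintro s ⟨hs, hsV⟩
  refine ⟨fun i => ?_, fun i => by simpa using hs {i}⟩
  have hsplit := sum_add_sum_compl {i} s
  rw [sum_singleton] at hsplit
  linarith [hs {i}ᶜ]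

theorem isCompact_basePolytope (G : Finset V → ℝ) : IsCompact (basePolytope G) :=
  isCompact_Icc.of_isClosed_subset (isClosed_basePolytope G) (basePolytope_subset_Icc G)

end Polytope

section LogPartition

variable {V : Type*} [Fintype V]

noncomputable def logPartitionFactorized (q : V → ℝ) : ℝ :=
  ∑ i, Real.log (1 + Real.exp (-q i))

theorem log_sum_exp_neg_sum_eq_logPartitionFactorized (q : V → ℝ) :
    Real.log (∑ A : Finset V, Real.exp (-∑ i ∈ A, q i)) = logPartitionFactorized q := by
  have hprod : ∑ A : Finset V, Real.exp (-∑ i ∈ A, q i) = ∏ i, (1 + Real.exp (-q i)) := by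
    rw [prod_one_add, powerset_univ]
    simp only [← sum_neg_distrib, Real.exp_sum]
  rw [hprod, Real.log_prod fun i _ => by positivity]
  rfl

theorem continuous_logPartitionFactorized :
    Continuous (logPartitionFactorized : (V → ℝ) → ℝ) :=
  continuous_finsetSum _ fun i _ =>
    (continuous_const.add (continuous_apply i).neg.rexp).log fun q =>
      (add_pos one_pos (Real.exp_pos (-q i))).ne'

theorem log_one_add_exp_neg_add_self (x : ℝ) :
    Real.log (1 + Real.exp (-x)) + x = Real.log (1 + Real.exp x) := by
  have h : 1 + Real.exp x = (1 + Real.exp (-x)) * Real.exp x := by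
    rw [add_mul, one_mul, ← Real.exp_add, neg_add_cancel, Real.exp_zero, add_comm]
  rw [h, Real.log_mul (by positivity) (Real.exp_pos x).ne', Real.log_exp]

theorem antitone_logPartitionFactorized :
    Antitone (logPartitionFactorized : (V → ℝ) → ℝ) := fun q q' h =>
  sum_le_sum fun i _ => Real.log_le_log (by positivity) (by gcongr; exact h i)

theorem logPartitionFactorized_le_add_sum_sub {s u : V → ℝ} (h : s ≤ u) :
    logPartitionFactorized s ≤ logPartitionFactorized u + ∑ i, (u i - s i) := by
  rw [logPartitionFactorized, logPartitionFactorized, ← sum_add_distrib]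
  refine sum_le_sum fun i _ => ?_
  have hmono : Real.log (1 + Real.exp (s i)) ≤ Real.log (1 + Real.exp (u i)) :=
    Real.log_le_log (by positivity) (by gcongr; exact h i)
  linarith [log_one_add_exp_neg_add_self (s i), log_one_add_exp_neg_add_self (u i)]

end LogPartition

section Divergence

variable {V : Type*} [Fintype V]

noncomputable def maxGap (F : Finset V → ℝ) (q : V → ℝ) : ℝ :=
  univ.sup' univ_nonempty fun S : Finset V => ∑ i ∈ S, q i - F S

theorem sub_le_maxGap (F : Finset V → ℝ) (q : V → ℝ) (A : Finset V) :
    ∑ i ∈ A, q i - F A ≤ maxGap F q :=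
  le_sup' (fun S : Finset V => ∑ i ∈ S, q i - F S) (mem_univ A)

theorem maxGap_nonneg {F : Finset V → ℝ} (hF0 : F ∅ = 0) (q : V → ℝ) : 0 ≤ maxGap F q := by
  simpa [hF0] using sub_le_maxGap F q ∅

theorem maxGap_eq_zero {F : Finset V → ℝ} (hF0 : F ∅ = 0) {q : V → ℝ}
    (hq : q ∈ submodularPolyhedron F) : maxGap F q = 0 :=
  le_antisymm (sup'_le _ _ fun S _ => sub_nonpos.2 (hq S)) (maxGap_nonneg hF0 q)

theorem dInfty_eq [DecidableEq V] (F : Finset V → ℝ) (q : V → ℝ) :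
    dInfty F q = maxGap F q - Real.log (∑ A : Finset V, Real.exp (-F A))
      + logPartitionFactorized q := by
  set ZP := ∑ A : Finset V, Real.exp (-F A)
  set ZQ := ∑ A : Finset V, Real.exp (-∑ i ∈ A, q i)
  have hZP : 0 < ZP := sum_pos (fun A _ => Real.exp_pos _) univ_nonempty
  have hZQ : 0 < ZQ := sum_pos (fun A _ => Real.exp_pos _) univ_nonempty
  set k := Real.log ZQ - Real.log ZP
  have hratio (S : Finset V) : Real.exp (-F S) / ZP / (Real.exp (-∑ i ∈ S, q i) / ZQ)
      = Real.exp (∑ i ∈ S, q i - F S + k) := by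
    rw [Real.exp_add, Real.exp_sub, Real.exp_sub, Real.exp_log hZQ, Real.exp_log hZP,
      Real.exp_neg, Real.exp_neg]
    field_simp
  have hsup : univ.sup' univ_nonempty (fun S : Finset V => Real.exp (∑ i ∈ S, q i - F S + k))
      = Real.exp (maxGap F q + k) :=
    (apply_sup'_eq_sup'_comp univ_nonempty (fun x => Real.exp (x + k))
      fun x y => (Real.exp_monotone.comp (add_left_mono (a := k))).map_max).symm
  rw [dInfty, funext hratio, hsup, Real.log_exp,
    ← log_sum_exp_neg_sum_eq_logPartitionFactorized]
  ring

end Divergence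

section Shift

variable {V : Type*} [DecidableEq V]

def shiftNonempty (F : Finset V → ℝ) (c : ℝ) (A : Finset V) : ℝ :=
  if A = ∅ then 0 else F A + c

theorem shiftNonempty_le {F : Finset V → ℝ} (hF0 : F ∅ = 0) {c : ℝ} (hc : 0 ≤ c)
    (A : Finset V) : shiftNonempty F c A ≤ F A + c := by
  unfold shiftNonempty
  split_ifs with hA
  · simp [hA, hF0, hc]
  · rfl

theorem submodular_shiftNonempty {F : Finset V → ℝ} (hF : Submodular F) (hF0 : F ∅ = 0)
    {c : ℝ} (hc : 0 ≤ c) : Submodular (shiftNonempty F c) := by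
  intro A B hAB x hxB
  have hmarg := hF A B hAB x hxB
  by_cases hB : B = ∅
  · subst hB
    rw [subset_empty.1 hAB]
  by_cases hA : A = ∅
  · subst hA
    simp only [shiftNonempty, if_neg hB, insert_ne_empty, if_true, if_false]
    linarith
  · simp only [shiftNonempty, hA, hB, insert_ne_empty, if_false]
    linarith

end Shift

section Main

variable {V : Type*} [Fintype V] [DecidableEq V]

theorem Submodular.exists_mem_basePolytope_logPartitionFactorized_le {F : Finset V → ℝ}
    (hF : Submodular F) (hF0 : F ∅ = 0) (q : V → ℝ) :
    ∃ s ∈ basePolytope F, logPartitionFactorized s ≤ logPartitionFactorized q + maxGap F q := by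
  have hc := maxGap_nonneg hF0 q
  -- for empty `V` the shifted function below vanishes on `univ = ∅`
  rcases isEmpty_or_nonempty V with hV | hV
  · obtain ⟨s, hs⟩ := hF.basePolytope_nonempty hF0
    exact ⟨s, hs, by rw [Subsingleton.elim s q]; linarith⟩
  set c := maxGap F q
  have hqG : q ∈ submodularPolyhedron (shiftNonempty F c) := fun A => by
    unfold shiftNonempty
    split_ifs with hA
    · simp [hA]
    · linarith [sub_le_maxGap F q A]
  obtain ⟨u, ⟨hu, huV⟩, hqu⟩ :=
    (submodular_shiftNonempty hF hF0 hc).exists_mem_basePolytope_ge (by simp [shiftNonempty]) hqG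
  simp only [shiftNonempty, univ_nonempty.ne_empty, if_false] at huV
  obtain ⟨s, hs, hsu⟩ := hF.exists_mem_basePolytope_le hF0 (u := u) fun A => by
    linarith [sum_add_sum_compl A u, hu Aᶜ, shiftNonempty_le hF0 hc Aᶜ]
  refine ⟨s, hs, ?_⟩
  calc logPartitionFactorized s ≤ logPartitionFactorized u + ∑ i, (u i - s i) :=
        logPartitionFactorized_le_add_sum_sub hsu
    _ = logPartitionFactorized u + c := by rw [sum_sub_distrib, huV, hs.2]; ring
    _ ≤ logPartitionFactorized q + c := by gcongr; exact antitone_logPartitionFactorized hqu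

end Main

/-- `min_Q D_∞(P‖Q) = -log Z_P + min_{s∈B(F)} ∑ log(1+exp(-sᵢ))`
and both problems have the same optimal modular parameter. -/
theorem stmt_9 {V : Type*} [Fintype V] [DecidableEq V]
    (F : Finset V → ℝ) (hsub : Submodular F) (hF0 : F ∅ = 0) :
    ∃ s : V → ℝ, s ∈ basePolytope F ∧
      (∀ z ∈ basePolytope F,
        ∑ i : V, Real.log (1 + Real.exp (-(s i)))
          ≤ ∑ i : V, Real.log (1 + Real.exp (-(z i)))) ∧
      (∀ q : V → ℝ, dInfty F s ≤ dInfty F q) ∧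
      dInfty F s = -Real.log (∑ A : Finset V, Real.exp (-(F A)))
        + ∑ i : V, Real.log (1 + Real.exp (-(s i))) := by
  obtain ⟨s, hsB, hsmin⟩ := (isCompact_basePolytope F).exists_isMinOn
    (hsub.basePolytope_nonempty hF0) continuous_logPartitionFactorized.continuousOn
  have hs : dInfty F s = -Real.log (∑ A : Finset V, Real.exp (-F A))
      + logPartitionFactorized s := by
    rw [dInfty_eq, maxGap_eq_zero hF0 hsB.1]
    ring
  refine ⟨s, hsB, fun z hz => hsmin hz, fun q => ?_, hs⟩
  obtain ⟨s', hs'B, hs'⟩ := hsub.exists_mem_basePolytope_logPartitionFactorized_le hF0 q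
  have hmin : logPartitionFactorized s ≤ logPartitionFactorized s' := hsmin hs'B
  rw [hs, dInfty_eq]
  linarith
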